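/- There exist constants c₁, c₂ > 0 such that for every integer r ≥ 2, writing p_i for the i-th prime number, N_r = p_1 + p_2 + ⋯ + p_r and P_r = p_1 · p_2 ⋯ p_r, one has 2^{c₁·√(N_r · log N_r)} ≤ P_r ≤ 2^{c₂·√(N_r · log N_r)}, where log denotes the natural logarithm and exponentiation is real exponentiation. -/

import Mathlib

/-!
Chebyshev's bounds give `p_n ≍ n log n`. Since `r! ≤ P_r ≤ p_{r+1}^r`, this yields
`log P_r ≍ r log r`; since `(r/2) p_{r/2} ≤ N_r ≤ r p_{r+1}`, it yields `N_r ≍ r² log r` and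
`log N_r ≍ log r`. Hence `√(N_r log N_r) ≍ r log r ≍ log P_r` as `r → ∞`, and since both sides are
positive for `r ≥ 2`, the finitely many remaining `r` only change the constants.
-/

open Real

/-- The sum of the first `r` prime numbers (so `primeSum 3 = 2 + 3 + 5`). -/
noncomputable def primeSum (r : ℕ) : ℕ :=
  ∑ i ∈ Finset.range r, Nat.nth Nat.Prime i

/-- The product of the first `r` prime numbers (so `primeProd 3 = 2 * 3 * 5`). -/
noncomputable def primeProd (r : ℕ) : ℕ :=
  ∏ i ∈ Finset.range r, Nat.nth Nat.Prime i

open Filter Asymptotics Finset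
open Nat (nth)
open scoped Nat Nat.Prime

namespace Asymptotics

lemma isBigO_of_eventually_le_mul {α : Type*} {l : Filter α} {f g : α → ℝ} (c : ℝ)
    (hf : ∀ᶠ x in l, 0 ≤ f x) (hfg : ∀ᶠ x in l, f x ≤ c * g x) : f =O[l] g := by
  refine IsBigO.of_bound |c| ?_
  filter_upwards [hf, hfg] with x hfx hfgx
  rw [norm_of_nonneg hfx, norm_eq_abs, ← abs_mul]
  exact hfgx.trans (le_abs_self _)

lemma IsBigO.exists_pos_forall_ge_le_mul {f g : ℕ → ℝ} {k : ℕ} (hfg : f =O[atTop] g)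
    (hf : ∀ n ≥ k, 0 < f n) (hg : ∀ n ≥ k, 0 < g n) : ∃ C > 0, ∀ n ≥ k, f n ≤ C * g n := by
  obtain ⟨C, hC⟩ := isBigO_iff.1 <| hfg.nat_of_atTop (l := 𝓟 (Set.Ici k))
    (eventually_principal.2 fun n hn hgn ↦ absurd hgn (hg n hn).ne')
  rw [eventually_principal] at hC
  have hle : ∀ n ≥ k, f n ≤ C * g n := fun n hn ↦ by
    simpa [abs_of_pos (hf n hn), abs_of_pos (hg n hn)] using hC n hn
  exact ⟨C, pos_of_mul_pos_left ((hf k le_rfl).trans_le (hle k le_rfl)) (hg k le_rfl).le, hle⟩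

lemma IsTheta.exists_pos_forall_ge_mul_le_le_mul {f g : ℕ → ℝ} {k : ℕ} (hfg : f =Θ[atTop] g)
    (hf : ∀ n ≥ k, 0 < f n) (hg : ∀ n ≥ k, 0 < g n) :
    ∃ c₁ c₂ : ℝ, 0 < c₁ ∧ 0 < c₂ ∧ ∀ n ≥ k, c₁ * g n ≤ f n ∧ f n ≤ c₂ * g n := by
  obtain ⟨C, hC, hfC⟩ := hfg.1.exists_pos_forall_ge_le_mul hf hg
  obtain ⟨D, hD, hgD⟩ := hfg.2.exists_pos_forall_ge_le_mul hg hf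
  refine ⟨D⁻¹, C, inv_pos.2 hD, hC, fun n hn ↦ ⟨?_, hfC n hn⟩⟩
  rw [inv_mul_le_iff₀ hD]
  exact hgD n hn

end Asymptotics

lemma primeCounting_nth_prime (n : ℕ) : π (nth Nat.Prime n) = n + 1 :=
  Nat.count_nth_succ_of_infinite Nat.infinite_setOfPred_prime n

lemma nth_prime_le_mul_log (n : ℕ) :
    (nth Nat.Prime n : ℝ) ≤ 2 * (n + 3) * log (nth Nat.Prime n) := by
  set q := nth Nat.Prime n
  have hq : (2 : ℝ) ≤ q := mod_cast (Nat.prime_nth_prime n).two_le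
  have hlog2 : (0 : ℝ) < log 2 := log_pos one_lt_two
  have hlogq : log 2 ≤ log q := log_le_log two_pos hq
  have hchebyshev := Chebyshev.pi_ge q
  rw [primeCounting_nth_prime, div_le_iff₀ (hlog2.trans_le hlogq)] at hchebyshev
  push_cast at hchebyshev
  have hlog_succ : log (q + 1) ≤ log 2 + log q := by
    rw [← log_mul two_ne_zero (by positivity)]
    exact log_le_log (by positivity) (by linarith)
  nlinarith [log_two_gt_d9]

lemma nth_prime_le_sq (n : ℕ) : (nth Nat.Prime n : ℝ) ≤ 16 * (n + 3) ^ 2 := by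
  set q := nth Nat.Prime n
  have hq : (0 : ℝ) < q := mod_cast (Nat.prime_nth_prime n).pos
  have hlog : log q ≤ 2 * √q := by
    have := log_le_sub_one_of_pos (sqrt_pos.2 hq)
    rw [log_sqrt hq.le] at this
    linarith
  have hsqrt : √q ≤ 4 * (n + 3) := by
    nlinarith [nth_prime_le_mul_log n, sqrt_nonneg (q : ℝ), mul_self_sqrt hq.le]
  nlinarith [sqrt_nonneg (q : ℝ), mul_self_sqrt hq.le]

lemma eventually_nth_prime_le_cube : ∀ᶠ n : ℕ in atTop, (nth Nat.Prime n : ℝ) ≤ n ^ 3 := by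
  filter_upwards [eventually_ge_atTop 25] with n hn
  have hn' : (25 : ℝ) ≤ n := mod_cast hn
  nlinarith [nth_prime_le_sq n]

lemma isBigO_log_nth_prime :
    (fun n : ℕ ↦ log (nth Nat.Prime n)) =O[atTop] fun n ↦ log n := by
  refine isBigO_of_eventually_le_mul 3 (Eventually.of_forall fun n ↦ log_natCast_nonneg _) ?_
  filter_upwards [eventually_nth_prime_le_cube] with n hcube
  have hq : (0 : ℝ) < nth Nat.Prime n := mod_cast (Nat.prime_nth_prime n).pos
  calc log (nth Nat.Prime n) ≤ log ((n : ℝ) ^ 3) := log_le_log hq hcube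
    _ = 3 * log n := by rw [log_pow]; norm_num

lemma isTheta_nth_prime :
    (fun n : ℕ ↦ (nth Nat.Prime n : ℝ)) =Θ[atTop] fun n ↦ n * log n := by
  constructor
  · have hlinear : (fun n : ℕ ↦ (n : ℝ) + 3) =O[atTop] fun n ↦ (n : ℝ) := by
      refine isBigO_of_eventually_le_mul 4 (Eventually.of_forall fun n ↦ by positivity) ?_
      filter_upwards [eventually_ge_atTop 1] with n hn
      have : (1 : ℝ) ≤ n := mod_cast hn
      linarith
    refine (isBigO_of_eventually_le_mul 2 (Eventually.of_forall fun n ↦ by positivity)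
      (Eventually.of_forall fun n ↦ ?_)).trans (hlinear.mul isBigO_log_nth_prime)
    simpa only [mul_assoc] using nth_prime_le_mul_log n
  · have hprime : Tendsto (fun n : ℕ ↦ (nth Nat.Prime n : ℝ)) atTop atTop :=
      tendsto_natCast_atTop_atTop.comp
        (Nat.nth_strictMono Nat.infinite_setOfPred_prime).tendsto_atTop
    refine isBigO_of_eventually_le_mul (log 4 + 1)
      (Eventually.of_forall fun n ↦ by positivity) ?_
    filter_upwards [hprime.eventually (Chebyshev.eventually_primeCounting_le one_pos)]
      with n hchebyshev
    set q := nth Nat.Prime n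
    have hnq : (n : ℝ) ≤ q := mod_cast (Nat.add_two_le_nth_prime n).trans' (by omega)
    have hlogq : 0 < log q := log_pos (by exact_mod_cast (Nat.prime_nth_prime n).one_lt)
    rw [Nat.floor_natCast, primeCounting_nth_prime, le_div_iff₀ hlogq] at hchebyshev
    push_cast at hchebyshev
    have hlog : log n ≤ log q := by
      rcases Nat.eq_zero_or_pos n with rfl | hn
      · simpa using hlogq.le
      · exact log_le_log (by positivity) hnq
    calc (n : ℝ) * log n ≤ (n + 1) * log q :=
          mul_le_mul (by linarith) hlog (log_natCast_nonneg n) (by positivity)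
      _ ≤ (log 4 + 1) * q := hchebyshev

lemma factorial_le_primeProd (r : ℕ) : r ! ≤ primeProd r := by
  rw [← prod_range_add_one_eq_factorial]
  exact prod_le_prod' fun i _ ↦ (Nat.add_two_le_nth_prime i).trans' (by omega)

lemma primeProd_pos (r : ℕ) : 0 < primeProd r :=
  (Nat.factorial_pos r).trans_le (factorial_le_primeProd r)

lemma primeProd_le_pow (r : ℕ) : primeProd r ≤ nth Nat.Prime r ^ r := by
  simpa [primeProd] using prod_le_pow_card (range r) _ _ fun i hi ↦
    (Nat.nth_strictMono Nat.infinite_setOfPred_prime).monotone (mem_range.1 hi).le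

lemma isTheta_log_primeProd :
    (fun r : ℕ ↦ log (primeProd r)) =Θ[atTop] fun r ↦ r * log r := by
  constructor
  · refine (isBigO_of_eventually_le_mul 1 (Eventually.of_forall fun r ↦ log_natCast_nonneg _)
      (Eventually.of_forall fun r ↦ ?_)).trans ((isBigO_refl _ _).mul isBigO_log_nth_prime)
    calc log (primeProd r : ℝ) ≤ log ((nth Nat.Prime r : ℝ) ^ r) :=
          log_le_log (mod_cast primeProd_pos r) (mod_cast primeProd_le_pow r)
      _ = 1 * (r * log (nth Nat.Prime r)) := by rw [log_pow, one_mul]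
  · refine isBigO_of_eventually_le_mul 2 (Eventually.of_forall fun r ↦ by positivity) ?_
    filter_upwards [eventually_ge_atTop 8] with r hr
    have hlog : 2 ≤ log r := by
      rw [le_log_iff_exp_le (by positivity)]
      have : (8 : ℝ) ≤ r := mod_cast hr
      have hexp : exp 2 = exp 1 * exp 1 := by rw [← exp_add]; norm_num
      nlinarith [exp_one_lt_d9, exp_pos 1]
    have hstirling := Stirling.le_log_factorial_stirling (n := r) (by omega)
    have hfactorial : log (r ! : ℝ) ≤ log (primeProd r) :=
      log_le_log (mod_cast r.factorial_pos) (mod_cast factorial_le_primeProd r)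
    have hlog_two_pi : 0 ≤ log (2 * Real.pi) := log_nonneg (by linarith [Real.pi_gt_three])
    nlinarith [log_natCast_nonneg r]

lemma le_primeSum (r : ℕ) : r ≤ primeSum r := by
  simpa [primeSum] using card_nsmul_le_sum (range r) _ 1 fun i _ ↦
    (Nat.prime_nth_prime i).one_le

lemma primeSum_le_mul (r : ℕ) : primeSum r ≤ r * nth Nat.Prime r := by
  simpa [primeSum] using sum_le_card_nsmul (range r) _ _ fun i hi ↦
    (Nat.nth_strictMono Nat.infinite_setOfPred_prime).monotone (mem_range.1 hi).le

lemma mul_nth_prime_half_le_primeSum (r : ℕ) :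
    (r - r / 2) * nth Nat.Prime (r / 2) ≤ primeSum r :=
  calc (r - r / 2) * nth Nat.Prime (r / 2)
      = #(Ico (r / 2) r) • nth Nat.Prime (r / 2) := by rw [Nat.card_Ico, smul_eq_mul]
    _ ≤ ∑ i ∈ Ico (r / 2) r, nth Nat.Prime i :=
        card_nsmul_le_sum _ _ _ fun i hi ↦
          (Nat.nth_strictMono Nat.infinite_setOfPred_prime).monotone (mem_Ico.1 hi).1
    _ ≤ primeSum r := sum_le_sum_of_subset (range_eq_Ico r ▸ Ico_subset_Ico_left (Nat.zero_le _))

lemma isTheta_primeSum :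
    (fun r : ℕ ↦ (primeSum r : ℝ)) =Θ[atTop] fun r ↦ r ^ 2 * log r := by
  constructor
  · refine (isBigO_of_eventually_le_mul 1 (Eventually.of_forall fun r ↦ by positivity)
      (Eventually.of_forall fun r ↦ ?_)).trans
      (((isBigO_refl _ _).mul isTheta_nth_prime.1).congr_right fun r ↦ by ring)
    simpa using (Nat.cast_le (α := ℝ)).2 (primeSum_le_mul r)
  · have hhalf : (fun r : ℕ ↦ ((r / 2 : ℕ) : ℝ) * log (r / 2 : ℕ)) =O[atTop]
        fun r ↦ (nth Nat.Prime (r / 2) : ℝ) :=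
      isTheta_nth_prime.2.comp_tendsto (Nat.tendsto_div_const_atTop two_ne_zero)
    have hcomplement : (fun r : ℕ ↦ ((r / 2 : ℕ) : ℝ)) =O[atTop] fun r ↦ ((r - r / 2 : ℕ) : ℝ) :=
      isBigO_of_eventually_le_mul 1 (Eventually.of_forall fun r ↦ by positivity)
        (Eventually.of_forall fun r ↦ by rw [one_mul]; exact_mod_cast (by omega))
    have hsum : (fun r : ℕ ↦ ((r - r / 2 : ℕ) : ℝ) * nth Nat.Prime (r / 2)) =O[atTop]
        fun r ↦ (primeSum r : ℝ) :=
      isBigO_of_eventually_le_mul 1 (Eventually.of_forall fun r ↦ by positivity)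
        (Eventually.of_forall fun r ↦ by
          rw [one_mul]; exact_mod_cast mul_nth_prime_half_le_primeSum r)
    refine (isBigO_of_eventually_le_mul 18 (Eventually.of_forall fun r ↦ by positivity)
      ?_).trans ((hcomplement.mul hhalf).trans hsum)
    filter_upwards [eventually_ge_atTop 6] with r hr
    set m := r / 2
    have hm : (3 : ℝ) ≤ m := mod_cast (show 3 ≤ m by omega)
    have hrm : (r : ℝ) ≤ 3 * m := mod_cast (show r ≤ 3 * m by omega)
    have hlog : log r ≤ 2 * log m :=
      calc log r ≤ log (3 * m) := log_le_log (by exact_mod_cast (show 0 < r by omega)) hrm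
        _ = log 3 + log m := log_mul (by norm_num) (by positivity)
        _ ≤ 2 * log m := by linarith [log_le_log (by norm_num) hm]
    have hlogr : 0 ≤ log (r : ℝ) := log_natCast_nonneg r
    calc (r : ℝ) ^ 2 * log r ≤ (3 * m) ^ 2 * (2 * log m) := by gcongr
      _ = 18 * (m * (m * log m)) := by ring

lemma isTheta_log_primeSum :
    (fun r : ℕ ↦ log (primeSum r)) =Θ[atTop] fun r ↦ log r := by
  constructor
  · refine isBigO_of_eventually_le_mul 4 (Eventually.of_forall fun r ↦ log_natCast_nonneg _) ?_
    filter_upwards [eventually_nth_prime_le_cube, eventually_ge_atTop 1] with r hcube hr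
    have hr' : (0 : ℝ) ≤ r := r.cast_nonneg
    calc log (primeSum r : ℝ) ≤ log ((r : ℝ) ^ 4) := by
          refine log_le_log (mod_cast hr.trans (le_primeSum r)) ?_
          calc (primeSum r : ℝ) ≤ r * nth Nat.Prime r := mod_cast primeSum_le_mul r
            _ ≤ r * r ^ 3 := by gcongr
            _ = r ^ 4 := by ring
      _ = 4 * log r := by rw [log_pow]; norm_num
  · refine isBigO_of_eventually_le_mul 1 (Eventually.of_forall fun r ↦ log_natCast_nonneg _) ?_
    filter_upwards [eventually_ge_atTop 1] with r hr
    rw [one_mul]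
    exact log_le_log (mod_cast hr) (mod_cast le_primeSum r)

lemma isTheta_log_primeProd_sqrt_primeSum_mul_log :
    (fun r : ℕ ↦ log (primeProd r)) =Θ[atTop]
      fun r ↦ √((primeSum r : ℝ) * log (primeSum r)) := by
  have hsq : (fun r : ℕ ↦ √((r : ℝ) ^ 2 * log r * log r)) = fun r : ℕ ↦ (r : ℝ) * log r := by
    ext r
    rw [show (r : ℝ) ^ 2 * log r * log r = (r * log r) ^ 2 by ring,
      sqrt_sq (mul_nonneg r.cast_nonneg (log_natCast_nonneg r))]
  have hsqrt := (isTheta_primeSum.mul isTheta_log_primeSum).sqrt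
    (Eventually.of_forall fun r ↦ mul_nonneg (primeSum r).cast_nonneg (log_natCast_nonneg _))
    (Eventually.of_forall fun r ↦ by have := log_natCast_nonneg r; positivity)
  rw [hsq] at hsqrt
  exact isTheta_log_primeProd.trans hsqrt.symm

theorem stmt19 :
    ∃ c₁ c₂ : ℝ, 0 < c₁ ∧ 0 < c₂ ∧ ∀ r : ℕ, 2 ≤ r →
      (2 : ℝ) ^ (c₁ * Real.sqrt ((primeSum r : ℝ) * Real.log (primeSum r)))
          ≤ (primeProd r : ℝ) ∧
        (primeProd r : ℝ)
          ≤ (2 : ℝ) ^ (c₂ * Real.sqrt ((primeSum r : ℝ) * Real.log (primeSum r))) := by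
  have hprod_pos (r : ℕ) : (0 : ℝ) < primeProd r := mod_cast primeProd_pos r
  have hlog_prod (r : ℕ) (hr : r ≥ 2) : 0 < log (primeProd r : ℝ) :=
    log_pos <| mod_cast hr.trans ((Nat.self_le_factorial r).trans (factorial_le_primeProd r))
  have hsqrt_sum (r : ℕ) (hr : r ≥ 2) : 0 < √((primeSum r : ℝ) * log (primeSum r)) := by
    have hsum : (1 : ℝ) < primeSum r := mod_cast hr.trans (le_primeSum r)
    exact sqrt_pos.2 (mul_pos (by linarith) (log_pos hsum))
  obtain ⟨c₁, c₂, hc₁, hc₂, hbounds⟩ :=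
    isTheta_log_primeProd_sqrt_primeSum_mul_log.exists_pos_forall_ge_mul_le_le_mul
      hlog_prod hsqrt_sum
  have hlog2 : (0 : ℝ) < log 2 := log_pos one_lt_two
  refine ⟨c₁ / log 2, c₂ / log 2, div_pos hc₁ hlog2, div_pos hc₂ hlog2, fun r hr ↦ ⟨?_, ?_⟩⟩
  · rw [rpow_le_iff_le_log two_pos (hprod_pos r), div_mul_eq_mul_div, div_mul_cancel₀ _ hlog2.ne']
    exact (hbounds r hr).1
  · rw [le_rpow_iff_log_le (hprod_pos r) two_pos, div_mul_eq_mul_div, div_mul_cancel₀ _ hlog2.ne']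
    exact (hbounds r hr).2
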